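/- (Relation between the two orderings) Let y x = Q x y with Q, q invertible central. Then (x + y)^N_{<q} = (x + Q^{N-1} y)^N_{> q/Q^2}, i.e. (x+y)(x+qy)···(x+q^{N-1}y) = (x + (q/Q^2)^{N-1} Q^{N-1} y)···(x + (q/Q^2) Q^{N-1} y)(x + Q^{N-1} y), where the right-hand side is the reversed-order q/Q^2-binomial product with the k = 0 factor rightmost. -/
import Mathlib


/-- Left-to-right ordered product `f 0 * f 1 * ⋯ * f (n-1)`. -/
def ascProd {A : Type*} [Ring A] (f : ℕ → A) : ℕ → A
  | 0 => 1
  | n + 1 => ascProd f n * f n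

/-- Right-to-left ordered product `f (n-1) * ⋯ * f 1 * f 0`. -/
def descProd {A : Type*} [Ring A] (f : ℕ → A) : ℕ → A
  | 0 => 1
  | n + 1 => f n * descProd f n

/-- Swap rule: `(x + c y)(x + a y) = (x + Q⁻¹ a y)(x + Q c y)` when `y x = Q x y`. -/
lemma swap_fac {R : Type*} [CommRing R] {A : Type*} [Ring A] [Algebra R A]
    (Qv Qi : R) (hQ : Qi * Qv = 1) (x y : A) (hyx : y * x = Qv • (x * y)) (c a : R) :
    (x + c • y) * (x + a • y) = (x + (Qi * a) • y) * (x + (Qv * c) • y) := by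
  simp only [add_mul, mul_add, smul_mul_assoc, mul_smul_comm, hyx, smul_smul]
  match_scalars
  · ring
  · linear_combination (-a) * hQ
  · linear_combination (-(a * c)) * hQ

/-- Pushing a factor `x + a y` leftwards through a descending product. -/
lemma push_fac {R : Type*} [CommRing R] {A : Type*} [Ring A] [Algebra R A]
    (Qv Qi : R) (hQ : Qi * Qv = 1) (x y : A) (hyx : y * x = Qv • (x * y)) (a : R) :
    ∀ (N : ℕ) (c : ℕ → R),
      descProd (fun k => x + (c k) • y) N * (x + a • y)
        = (x + (Qi ^ N * a) • y) * descProd (fun k => x + (Qv * c k) • y) N := by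
  intro N
  induction N with
  | zero => intro c; simp [descProd]
  | succ n ih =>
      intro c
      calc descProd (fun k => x + (c k) • y) (n + 1) * (x + a • y)
          = (x + (c n) • y) * (descProd (fun k => x + (c k) • y) n * (x + a • y)) := by
            simp [descProd, mul_assoc]
        _ = (x + (c n) • y) * ((x + (Qi ^ n * a) • y)
              * descProd (fun k => x + (Qv * c k) • y) n) := by rw [ih]
        _ = ((x + (c n) • y) * (x + (Qi ^ n * a) • y))
              * descProd (fun k => x + (Qv * c k) • y) n := by rw [mul_assoc]
        _ = ((x + (Qi * (Qi ^ n * a)) • y) * (x + (Qv * c n) • y))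
              * descProd (fun k => x + (Qv * c k) • y) n := by
            rw [swap_fac Qv Qi hQ x y hyx]
        _ = (x + (Qi ^ (n + 1) * a) • y)
              * descProd (fun k => x + (Qv * c k) • y) (n + 1) := by
            simp [descProd, pow_succ, mul_assoc, mul_comm, mul_left_comm]

/-- relation between the two orderings: if `y x = Q (x y)` then
    `(x+y)^N_{<q} = (x + Q^{N-1} y)^N_{> q/Q²}`, i.e.
    `(x+y)(x+qy)⋯(x+q^{N-1}y)
       = (x+(q/Q²)^{N-1}Q^{N-1}y)⋯(x+(q/Q²)Q^{N-1}y)(x+Q^{N-1}y)`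
    with the k = 0 factor rightmost. -/
theorem ordering_relation {R : Type*} [CommRing R] {A : Type*} [Ring A]
    [Algebra R A] (q Q : Rˣ) (x y : A)
    (hyx : y * x = (Q : R) • (x * y)) (N : ℕ) :
    ascProd (fun k => x + ((q ^ k : Rˣ) : R) • y) N
      = descProd
          (fun k => x + (((q * (Q ^ 2)⁻¹) ^ k * Q ^ ((N : ℤ) - 1) : Rˣ) : R) • y)
          N := by
  have hQ : ((Q⁻¹ : Rˣ) : R) * ((Q : Rˣ) : R) = 1 := by
    rw [← Units.val_mul]; simp
  induction N with
  | zero => simp [ascProd, descProd]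
  | succ n ih =>
      have step := push_fac ((Q : Rˣ) : R) ((Q⁻¹ : Rˣ) : R) hQ x y hyx
        ((q ^ n : Rˣ) : R) n
        (fun k => (((q * (Q ^ 2)⁻¹) ^ k * Q ^ ((n : ℤ) - 1) : Rˣ) : R))
      have h1 : (((n + 1 : ℕ)) : ℤ) - 1 = (n : ℤ) := by push_cast; ring
      have hu1 : ∀ k : ℕ, (Q * ((q * (Q ^ 2)⁻¹) ^ k * Q ^ ((n : ℤ) - 1)) : Rˣ)
          = ((q * (Q ^ 2)⁻¹) ^ k * Q ^ (((n + 1 : ℕ) : ℤ) - 1) : Rˣ) := by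
        intro k
        rw [h1, mul_left_comm, ← zpow_one_add]
        norm_num
      have hu2 : ((Q⁻¹ : Rˣ) ^ n * q ^ n : Rˣ)
          = ((q * (Q ^ 2)⁻¹) ^ n * Q ^ (((n + 1 : ℕ) : ℤ) - 1) : Rˣ) := by
        rw [h1, zpow_natCast, mul_pow, mul_comm ((Q⁻¹ : Rˣ) ^ n), mul_assoc]
        congr 1
        group
      have hfun : (fun k => x + (((Q : Rˣ) : R)
            * (((q * (Q ^ 2)⁻¹) ^ k * Q ^ ((n : ℤ) - 1) : Rˣ) : R)) • y)
          = (fun k => x + (((q * (Q ^ 2)⁻¹) ^ k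
            * Q ^ (((n + 1 : ℕ) : ℤ) - 1) : Rˣ) : R) • y) := by
        funext k
        rw [← hu1 k]
        push_cast
        ring_nf
      have htop : (((Q⁻¹ : Rˣ) : R) ^ n * ((q ^ n : Rˣ) : R))
          = (((q * (Q ^ 2)⁻¹) ^ n * Q ^ (((n + 1 : ℕ) : ℤ) - 1) : Rˣ) : R) := by
        rw [← hu2]
        push_cast
        ring
      rw [ascProd, ih, step, hfun, htop]
      conv_rhs => rw [descProd]
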